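/- arXiv:2007.07560 — 4 statements merged into one kernel-verified Lean document; each statement's English description precedes it below -/
import Mathlib

section
/- If Y : [0,1] → ℕ is injective, then for each n ∈ ℕ the set O_n = { x ∈ [0,1] : Y(x) > n } is open in [0,1] and dense in [0,1], while the intersection ⋂_{n∈ℕ} O_n is empty. -/
/-- For an injective `Y : [0,1] → ℕ`, the sets `O n = {x | Y x > n}` are open and dense
in `[0,1]`, with empty intersection. -/
theorem dense_open_sets_of_injection (Y : (Set.Icc (0:ℝ) 1) → ℕ)
    (hY : Function.Injective Y) :
    (∀ n : ℕ, IsOpen {x : Set.Icc (0:ℝ) 1 | Y x > n} ∧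
      Dense {x : Set.Icc (0:ℝ) 1 | Y x > n}) ∧
    (⋂ n : ℕ, {x : Set.Icc (0:ℝ) 1 | Y x > n}) = ∅ := by
  constructor
  · intro n
    have hcompl : {x : Set.Icc (0:ℝ) 1 | Y x > n}ᶜ = Y ⁻¹' (Set.Iic n) := by
      ext x; simp [Set.mem_compl_iff, not_lt]
    have hfin : (Y ⁻¹' (Set.Iic n)).Finite :=
      Set.Finite.preimage hY.injOn (Set.finite_Iic n)
    constructor
    · rw [← isClosed_compl_iff, hcompl]
      exact hfin.isClosed
    · rw [← compl_compl {x : Set.Icc (0:ℝ) 1 | Y x > n}, hcompl]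
      have : (Y ⁻¹' (Set.Iic n))ᶜ = ⋂ x ∈ Y ⁻¹' (Set.Iic n), ({x}ᶜ : Set (Set.Icc (0:ℝ) 1)) := by
        ext y
        simp only [Set.mem_compl_iff, Set.mem_preimage, Set.mem_Iic, not_le, Set.mem_iInter,
          Set.mem_compl_iff, Set.mem_singleton_iff]
        constructor
        · rintro h x hx rfl; exact absurd hx (not_le.mpr h)
        · intro h; by_contra hc; exact h y (not_lt.mp hc) rfl
      rw [this]
      exact dense_biInter_of_isOpen (fun _ _ => isOpen_compl_singleton) hfin.countable
        (fun x _ => dense_compl_singleton x)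
  · ext x
    simp only [Set.mem_iInter, Set.mem_setOf_eq, Set.mem_empty_iff_false, iff_false, not_forall,
      not_lt]
    exact ⟨Y x, le_refl _⟩
end

section
/- Arzelà's bounded convergence theorem for the Riemann integral implies the uncountability of [0,1]: if for every sequence (f_n) of Riemann integrable functions on [0,1], uniformly bounded and converging pointwise to a Riemann integrable function f, one has ∫₀¹ f_n → ∫₀¹ f, then there is no injection from [0,1] to ℕ. -/
/-- `g` has Riemann integral `I` on `[0,1]`: every sufficiently fine tagged partition
has Riemann sum within `ε` of `I`. -/
def HasRiemannIntegral (g : ℝ → ℝ) (I : ℝ) : Prop :=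
  ∀ ε > (0:ℝ), ∃ δ > (0:ℝ), ∀ (n : ℕ) (t ξ : ℕ → ℝ),
    0 < n → t 0 = 0 → t n = 1 →
    (∀ i < n, t i < t (i + 1)) →
    (∀ i < n, t (i + 1) - t i < δ) →
    (∀ i < n, ξ i ∈ Set.Icc (t i) (t (i + 1))) →
    |(∑ i ∈ Finset.range n, g (ξ i) * (t (i + 1) - t i)) - I| < ε

lemma tmono (t : ℕ → ℝ) (n : ℕ) (h : ∀ i < n, t i < t (i + 1)) :
    ∀ i j, i < j → j ≤ n → t i < t j := by
  intro i j hij hjn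
  induction j with
  | zero => omega
  | succ k ih =>
    rcases Nat.lt_succ_iff_lt_or_eq.mp hij with h' | h'
    · exact lt_trans (ih h' (by omega)) (h k (by omega))
    · subst h'; exact h i (by omega)

lemma hri_one : HasRiemannIntegral (fun _ => 1) 1 := by
  intro ε hε
  refine ⟨1, one_pos, fun n t ξ hn h0 h1 _ _ _ => ?_⟩
  have : ∑ i ∈ Finset.range n, (fun _ : ℝ => (1:ℝ)) (ξ i) * (t (i + 1) - t i)
      = t n - t 0 := by
    simp only [one_mul]
    exact Finset.sum_range_sub t n
  rw [this, h0, h1]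
  simpa using hε

lemma hri_finite (g : ℝ → ℝ) (S : Finset ℝ)
    (hg : ∀ x, x ∉ S → g x = 0) (hb : ∀ x, |g x| ≤ 1) :
    HasRiemannIntegral g 0 := by
  intro ε hε
  set δ : ℝ := ε / (2 * S.card + 1) with hδdef
  have hden : (0:ℝ) < 2 * S.card + 1 := by positivity
  have hδ : 0 < δ := div_pos hε hden
  refine ⟨δ, hδ, fun n t ξ hn h0 h1 hinc hmesh htag => ?_⟩
  set B : Finset ℕ := (Finset.range n).filter (fun i => g (ξ i) ≠ 0) with hB
  have hsum : ∑ i ∈ Finset.range n, g (ξ i) * (t (i + 1) - t i)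
      = ∑ i ∈ B, g (ξ i) * (t (i + 1) - t i) := by
    rw [hB, Finset.sum_filter_of_ne]
    intro i _ hne
    intro h
    exact hne (by rw [h, zero_mul])
  -- card bound
  have hcard : B.card ≤ 2 * S.card := by
    have himg : B.image ξ ⊆ S := by
      intro s hs
      rcases Finset.mem_image.mp hs with ⟨i, hi, rfl⟩
      by_contra hns
      exact (Finset.mem_filter.mp hi).2 (hg _ hns)
    have hfib : ∀ a ∈ B, (B.filter fun x => ξ x = ξ a).card ≤ 2 := by
      intro a ha
      set Fi := B.filter fun x => ξ x = ξ a with hFi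
      have hne : Fi.Nonempty := ⟨a, Finset.mem_filter.mpr ⟨ha, rfl⟩⟩
      set m := Fi.min' hne with hm
      have hmFi : m ∈ Fi := Fi.min'_mem hne
      have hsub : Fi ⊆ {m, m + 1} := by
        intro j hj
        have hmj : m ≤ j := Fi.min'_le j hj
        by_contra hjm
        simp only [Finset.mem_insert, Finset.mem_singleton] at hjm
        push_neg at hjm
        have hj2 : m + 2 ≤ j := by omega
        have hjn : j < n := Finset.mem_range.mp (Finset.mem_filter.mp
          ((Finset.mem_filter.mp hj).1)).1
        have hmn : m < n := Finset.mem_range.mp (Finset.mem_filter.mp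
          ((Finset.mem_filter.mp hmFi).1)).1
        have hξj : ξ j = ξ a := (Finset.mem_filter.mp hj).2
        have hξm : ξ m = ξ a := (Finset.mem_filter.mp hmFi).2
        have h1 : ξ a ≤ t (m + 1) := by
          have := (htag m hmn).2; rwa [hξm] at this
        have h2 : t j ≤ ξ a := by
          have := (htag j hjn).1; rwa [hξj] at this
        have h3 : t (m + 1) < t j :=
          tmono t n hinc (m + 1) j (by omega) (by omega)
        linarith
      calc Fi.card ≤ ({m, m + 1} : Finset ℕ).card := Finset.card_le_card hsub
        _ ≤ 2 := Finset.card_insert_le _ _ |>.trans (by simp)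
    have hfib' : ∀ b ∈ B.image ξ, (B.filter fun a => ξ a = b).card ≤ 2 := by
      intro b hb'
      rcases Finset.mem_image.mp hb' with ⟨a, ha, rfl⟩
      exact hfib a ha
    calc B.card ≤ 2 * (B.image ξ).card := Finset.card_le_mul_card_image B 2 hfib'
      _ ≤ 2 * S.card := by
          exact Nat.mul_le_mul_left 2 (Finset.card_le_card himg)
  have hbound : |∑ i ∈ B, g (ξ i) * (t (i + 1) - t i)| ≤ B.card * δ := by
    calc |∑ i ∈ B, g (ξ i) * (t (i + 1) - t i)|
        ≤ ∑ i ∈ B, |g (ξ i) * (t (i + 1) - t i)| := Finset.abs_sum_le_sum_abs _ _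
      _ ≤ ∑ i ∈ B, δ := by
          apply Finset.sum_le_sum
          intro i hi
          have hin : i < n := Finset.mem_range.mp (Finset.mem_filter.mp hi).1
          have hpos : 0 ≤ t (i + 1) - t i := le_of_lt (sub_pos.mpr (hinc i hin))
          rw [abs_mul, abs_of_nonneg hpos]
          calc |g (ξ i)| * (t (i + 1) - t i) ≤ 1 * (t (i + 1) - t i) := by
                exact mul_le_mul_of_nonneg_right (hb _) hpos
            _ = t (i + 1) - t i := one_mul _
            _ ≤ δ := le_of_lt (hmesh i hin)
      _ = B.card * δ := by rw [Finset.sum_const, nsmul_eq_mul]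
  rw [sub_zero, hsum]
  calc |∑ i ∈ B, g (ξ i) * (t (i + 1) - t i)| ≤ B.card * δ := hbound
    _ ≤ (2 * S.card) * δ := by
        apply mul_le_mul_of_nonneg_right _ (le_of_lt hδ)
        exact_mod_cast hcard
    _ < (2 * S.card + 1) * δ := by nlinarith
    _ = ε := by
        rw [hδdef]
        field_simp

/-- Arzelà's bounded convergence theorem for the Riemann integral implies that
there is no injection from [0,1] to ℕ. -/
theorem arzela_implies_nin
    (arzela : ∀ (f : ℝ → ℝ) (F : ℕ → ℝ → ℝ) (I : ℝ) (J : ℕ → ℝ),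
      (∀ n, HasRiemannIntegral (F n) (J n)) →
      HasRiemannIntegral f I →
      (∃ M : ℝ, ∀ n, ∀ x ∈ Set.Icc (0:ℝ) 1, |F n x| ≤ M) →
      (∀ x ∈ Set.Icc (0:ℝ) 1,
        Filter.Tendsto (fun n => F n x) Filter.atTop (nhds (f x))) →
      Filter.Tendsto J Filter.atTop (nhds I)) :
    ∀ Y : ℝ → ℕ, ¬ Set.InjOn Y (Set.Icc (0:ℝ) 1) := by
  intro Y hY
  set F : ℕ → ℝ → ℝ := fun n x =>
    if x ∈ Set.Icc (0:ℝ) 1 ∧ Y x < n then 1 else 0 with hF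
  have hSfin : ∀ n : ℕ, {x : ℝ | x ∈ Set.Icc (0:ℝ) 1 ∧ Y x < n}.Finite := by
    intro n
    apply Set.Finite.of_finite_image (f := Y)
    · apply Set.Finite.subset (Set.finite_Iio n)
      rintro m ⟨x, hx, rfl⟩
      exact hx.2
    · exact hY.mono (fun x hx => hx.1)
  have hJ : ∀ n, HasRiemannIntegral (F n) 0 := by
    intro n
    apply hri_finite (F n) (hSfin n).toFinset
    · intro x hx
      simp only [Set.Finite.mem_toFinset, Set.mem_setOf_eq] at hx
      show (if x ∈ Set.Icc (0:ℝ) 1 ∧ Y x < n then (1:ℝ) else 0) = 0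
      exact if_neg hx
    · intro x
      show |if x ∈ Set.Icc (0:ℝ) 1 ∧ Y x < n then (1:ℝ) else 0| ≤ 1
      split <;> simp
  have hten : Filter.Tendsto (fun _ : ℕ => (0:ℝ)) Filter.atTop (nhds 1) := by
    apply arzela (fun _ => 1) F 1 (fun _ => 0) hJ hri_one ⟨1, ?_⟩ ?_
    · intro n x _
      show |if x ∈ Set.Icc (0:ℝ) 1 ∧ Y x < n then (1:ℝ) else 0| ≤ 1
      split <;> simp
    · intro x hx
      apply Filter.Tendsto.congr' _ tendsto_const_nhds
      filter_upwards [Filter.eventually_ge_atTop (Y x + 1)] with n hn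
      show (1:ℝ) = if x ∈ Set.Icc (0:ℝ) 1 ∧ Y x < n then (1:ℝ) else 0
      exact (if_pos ⟨hx, by omega⟩).symm
  have := tendsto_nhds_unique hten tendsto_const_nhds
  norm_num at this
end

section
/- Let Y : [0,1] → ℕ be injective and let d be the metric d(x,y) = |2^{−Y(x)} − 2^{−Y(y)}| (with the conventions d(0,0)=0, d(x,0)=2^{−Y(x)}). If a sequence (x_n) in [0,1] satisfies: for every x ∈ [0,1] and every k ∈ ℕ there is n with d(x, x_n) < 2^{−k}, then every x ∈ [0,1] equals some x_n. Consequently, the metric space ([0,1], d) is not separable. -/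
lemma pow_half_eq_of_close (a b : ℕ)
    (h : |((1:ℝ)/2) ^ a - ((1:ℝ)/2) ^ b| < ((1:ℝ)/2) ^ (a+1)) : a = b := by
  rcases lt_trichotomy a b with hab | hab | hab
  · exfalso
    have hb : ((1:ℝ)/2) ^ b ≤ ((1:ℝ)/2) ^ (a+1) :=
      pow_le_pow_of_le_one (by norm_num) (by norm_num) hab
    have h1 : ((1:ℝ)/2) ^ a - ((1:ℝ)/2) ^ b ≤ |((1:ℝ)/2) ^ a - ((1:ℝ)/2) ^ b| :=
      le_abs_self _
    have : ((1:ℝ)/2) ^ (a+1) + ((1:ℝ)/2) ^ (a+1) = ((1:ℝ)/2) ^ a := by ring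
    nlinarith
  · exact hab
  · exfalso
    have hb : ((1:ℝ)/2) ^ a ≤ ((1:ℝ)/2) ^ (b+1) :=
      pow_le_pow_of_le_one (by norm_num) (by norm_num) hab
    have h1 : ((1:ℝ)/2) ^ b - ((1:ℝ)/2) ^ a ≤ |((1:ℝ)/2) ^ a - ((1:ℝ)/2) ^ b| := by
      rw [abs_sub_comm]; exact le_abs_self _
    have h2 : ((1:ℝ)/2) ^ (a+1) ≤ ((1:ℝ)/2) ^ (b+1) :=
      pow_le_pow_of_le_one (by norm_num) (by norm_num) (by omega)
    have : ((1:ℝ)/2) ^ (b+1) + ((1:ℝ)/2) ^ (b+1) = ((1:ℝ)/2) ^ b := by ring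
    nlinarith

/-- For the metric `d` built from an injection `Y : [0,1] → ℕ`, any sequence that is
`d`-dense in `[0,1]` must enumerate all of `[0,1]`; consequently `([0,1], d)` is not
separable. -/
theorem injection_metric_not_separable (Y : ℝ → ℕ)
    (hY : Set.InjOn Y (Set.Icc (0:ℝ) 1))
    (d : ℝ → ℝ → ℝ)
    (hd : ∀ x ∈ Set.Icc (0:ℝ) 1, ∀ y ∈ Set.Icc (0:ℝ) 1, x ≠ 0 → y ≠ 0 →
      d x y = |((1:ℝ)/2) ^ (Y x) - ((1:ℝ)/2) ^ (Y y)|)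
    (hd00 : d 0 0 = 0)
    (hd0 : ∀ x ∈ Set.Icc (0:ℝ) 1, x ≠ 0 →
      d x 0 = ((1:ℝ)/2) ^ (Y x) ∧ d 0 x = ((1:ℝ)/2) ^ (Y x))
    (x : ℕ → ℝ) (hx : ∀ n, x n ∈ Set.Icc (0:ℝ) 1)
    (hdense : ∀ z ∈ Set.Icc (0:ℝ) 1, ∀ k : ℕ, ∃ n, d z (x n) < ((1:ℝ)/2) ^ k) :
    (∀ z ∈ Set.Icc (0:ℝ) 1, ∃ n, z = x n) ∧
    ¬ ∃ x' : ℕ → ℝ, (∀ n, x' n ∈ Set.Icc (0:ℝ) 1) ∧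
      (∀ z ∈ Set.Icc (0:ℝ) 1, ∀ k : ℕ, ∃ n, d z (x' n) < ((1:ℝ)/2) ^ k) := by
  -- Any `d`-dense sequence leads to a contradiction.
  have key : ∀ x' : ℕ → ℝ, (∀ n, x' n ∈ Set.Icc (0:ℝ) 1) →
      (∀ z ∈ Set.Icc (0:ℝ) 1, ∀ k : ℕ, ∃ n, d z (x' n) < ((1:ℝ)/2) ^ k) → False := by
    intro x' hx' hdense'
    -- every nonzero point of [0,1] occurs in the sequence
    have henum : ∀ z ∈ Set.Icc (0:ℝ) 1, z ≠ 0 → ∃ n, z = x' n := by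
      intro z hz hz0
      obtain ⟨n, hn⟩ := hdense' z hz (Y z + 1)
      by_cases hxn : x' n = 0
      · exfalso
        rw [hxn] at hn
        rw [(hd0 z hz hz0).1] at hn
        have : ((1:ℝ)/2) ^ (Y z + 1) ≤ ((1:ℝ)/2) ^ (Y z) :=
          pow_le_pow_of_le_one (by norm_num) (by norm_num) (by omega)
        linarith
      · rw [hd z hz (x' n) (hx' n) hz0 hxn] at hn
        have hYeq : Y z = Y (x' n) := pow_half_eq_of_close _ _ hn
        exact ⟨n, hY hz (hx' n) hYeq⟩
    -- hence the uncountable set (0,1) is contained in the range of the sequence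
    have hsub : Set.Ioo (0:ℝ) 1 ⊆ Set.range x' := by
      intro z hz
      obtain ⟨n, hn⟩ := henum z ⟨le_of_lt hz.1, le_of_lt hz.2⟩ (ne_of_gt hz.1)
      exact ⟨n, hn.symm⟩
    have hcnt : (Set.Ioo (0:ℝ) 1).Countable :=
      (Set.countable_range x').mono hsub
    have : Cardinal.mk (Set.Ioo (0:ℝ) 1) ≤ Cardinal.aleph0 :=
      Set.Countable.le_aleph0 hcnt
    rw [Cardinal.mk_Ioo_real (by norm_num : (0:ℝ) < 1)] at this
    exact absurd this (not_le.mpr Cardinal.aleph0_lt_continuum)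
  exact absurd hdense (fun h => key x hx h)
end

section
/- The Heine-Borel property for arbitrary (uncountable) coverings of [0,1] by intervals centered at points implies the uncountability of [0,1]: suppose that for every function Ψ : [0,1] → (0,∞) there exist finitely many points y_0, …, y_k ∈ [0,1] such that every x ∈ [0,1] lies in (y_i − Ψ(y_i), y_i + Ψ(y_i)) for some i ≤ k. Then there is no injection from [0,1] to ℕ. -/
open MeasureTheory ENNReal

/-- The Heine-Borel theorem for uncountable canonical coverings of [0,1] implies
that there is no injection from [0,1] to ℕ. -/
theorem hbu_implies_nin
    (HBU : ∀ Ψ : ℝ → ℝ, (∀ x ∈ Set.Icc (0:ℝ) 1, 0 < Ψ x) →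
      ∃ (k : ℕ) (y : ℕ → ℝ), (∀ i ≤ k, y i ∈ Set.Icc (0:ℝ) 1) ∧
        ∀ x ∈ Set.Icc (0:ℝ) 1, ∃ i ≤ k,
          x ∈ Set.Ioo (y i - Ψ (y i)) (y i + Ψ (y i))) :
    ∀ Y : ℝ → ℕ, ¬ Set.InjOn Y (Set.Icc (0:ℝ) 1) := by
  intro Y hY
  set Ψ : ℝ → ℝ := fun x => (1/2 : ℝ) ^ (Y x + 3) with hΨdef
  have hpos : ∀ x ∈ Set.Icc (0:ℝ) 1, 0 < Ψ x := by
    intro x _; positivity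
  obtain ⟨k, y, hy, hcov⟩ := HBU Ψ hpos
  set s : Finset ℝ := (Finset.range (k+1)).image y with hs
  have hs_sub : ∀ p ∈ s, p ∈ Set.Icc (0:ℝ) 1 := by
    intro p hp
    obtain ⟨i, hi, rfl⟩ := Finset.mem_image.mp hp
    exact hy i (Nat.lt_succ_iff.mp (Finset.mem_range.mp hi))
  have hsub : Set.Icc (0:ℝ) 1 ⊆ ⋃ p ∈ s, Set.Ioo (p - Ψ p) (p + Ψ p) := by
    intro x hx
    obtain ⟨i, hi, hxi⟩ := hcov x hx
    exact Set.mem_biUnion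
      (Finset.mem_image_of_mem y (Finset.mem_range.mpr (Nat.lt_succ_of_le hi))) hxi
  have hle : (1 : ℝ≥0∞) ≤ ∑ p ∈ s, volume (Set.Ioo (p - Ψ p) (p + Ψ p)) := by
    calc (1 : ℝ≥0∞) = volume (Set.Icc (0:ℝ) 1) := by simp
    _ ≤ volume (⋃ p ∈ s, Set.Ioo (p - Ψ p) (p + Ψ p)) := measure_mono hsub
    _ ≤ ∑ p ∈ s, volume (Set.Ioo (p - Ψ p) (p + Ψ p)) := measure_biUnion_finset_le s _
  have hvol : ∀ p, volume (Set.Ioo (p - Ψ p) (p + Ψ p))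
      = (1/2 : ℝ≥0∞) ^ (Y p + 2) := by
    intro p
    rw [Real.volume_Ioo]
    have h1 : p + Ψ p - (p - Ψ p) = (1/2 : ℝ) ^ (Y p + 2) := by
      have : p + Ψ p - (p - Ψ p) = 2 * Ψ p := by ring
      rw [this]
      show 2 * (1/2 : ℝ) ^ (Y p + 2 + 1) = _
      rw [pow_succ]; ring
    rw [h1, ENNReal.ofReal_pow (by norm_num : (0:ℝ) ≤ 1/2)]
    congr 1
    rw [ENNReal.ofReal_div_of_pos (by norm_num)]
    norm_num
  have hsum : ∑ p ∈ s, volume (Set.Ioo (p - Ψ p) (p + Ψ p))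
      = ∑ n ∈ s.image Y, (1/2 : ℝ≥0∞) ^ (n + 2) := by
    rw [Finset.sum_image (fun a ha b hb hab => hY (hs_sub a ha) (hs_sub b hb) hab)]
    exact Finset.sum_congr rfl fun p _ => hvol p
  have htsum : ∑' n : ℕ, (1/2 : ℝ≥0∞) ^ (n + 2) = 1/2 := by
    have := ENNReal.tsum_geometric (1/2 : ℝ≥0∞)
    calc ∑' n : ℕ, (1/2 : ℝ≥0∞) ^ (n + 2)
        = ∑' n : ℕ, (1/2 : ℝ≥0∞) ^ 2 * (1/2 : ℝ≥0∞) ^ n := by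
          congr 1; funext n; rw [pow_add, mul_comm]
      _ = (1/2 : ℝ≥0∞) ^ 2 * (1 - 1/2)⁻¹ := by rw [ENNReal.tsum_mul_left, this]
      _ = 1/2 := by
          simp only [one_div]
          rw [ENNReal.one_sub_inv_two, inv_inv, sq, mul_assoc,
            ENNReal.inv_mul_cancel (by norm_num) (by norm_num), mul_one]
  have hbound : ∑ n ∈ s.image Y, (1/2 : ℝ≥0∞) ^ (n + 2) ≤ 1/2 := by
    exact le_trans (ENNReal.sum_le_tsum _) (le_of_eq htsum)
  have : (1 : ℝ≥0∞) ≤ 1/2 := le_trans hle (by rw [hsum]; exact hbound)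
  norm_num at this
end
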